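/- The blob tree of a binary tree-child phylogenetic network has a unique node for each label: no two blob nodes in BT(N) carry the same leaf-descendant set. -/

import Mathlib

open scoped Classical
noncomputable section

/-- A (rooted binary phylogenetic) network datum: a finite directed graph on `ℕ`
with an optional leaf-labelling by `α`. -/
structure Net (α : Type) where
  verts : Finset ℕ
  edges : Finset (ℕ × ℕ)
  lab : ℕ → Option α

namespace Net

variable {α β : Type}

def Edge (N : Net α) (u v : ℕ) : Prop := (u, v) ∈ N.edges

def indeg (N : Net α) (v : ℕ) : ℕ := (N.edges.filter fun e => e.2 = v).card
def outdeg (N : Net α) (v : ℕ) : ℕ := (N.edges.filter fun e => e.1 = v).card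

/-- Reachability by directed paths. -/
def Reaches (N : Net α) : ℕ → ℕ → Prop := Relation.ReflTransGen N.Edge

def IsRoot (N : Net α) (v : ℕ) : Prop :=
  v ∈ N.verts ∧ N.indeg v = 0 ∧ N.outdeg v = 1
def IsLeaf (N : Net α) (v : ℕ) : Prop :=
  v ∈ N.verts ∧ N.indeg v = 1 ∧ N.outdeg v = 0
def IsTreeNode (N : Net α) (v : ℕ) : Prop :=
  v ∈ N.verts ∧ N.indeg v = 1 ∧ N.outdeg v = 2
def IsRetic (N : Net α) (v : ℕ) : Prop :=
  v ∈ N.verts ∧ N.indeg v = 2 ∧ N.outdeg v = 1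

/-- `N` is a rooted binary phylogenetic network on leaf set `α`. -/
def IsNetwork (N : Net α) : Prop :=
  (∀ e ∈ N.edges, e.1 ∈ N.verts ∧ e.2 ∈ N.verts) ∧
  (∀ u v, N.Edge u v → ¬ N.Reaches v u) ∧
  (∃! r, N.IsRoot r) ∧
  (∀ v ∈ N.verts, N.IsRoot v ∨ N.IsLeaf v ∨ N.IsTreeNode v ∨ N.IsRetic v) ∧
  (∀ v, (∃ x, N.lab v = some x) ↔ N.IsLeaf v) ∧
  (∀ x : α, ∃! v, N.lab v = some x)

/-- Tree-child: every non-leaf node has a child that is a tree node or a leaf. -/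
def TreeChild (N : Net α) : Prop :=
  N.IsNetwork ∧
  ∀ v ∈ N.verts, ¬ N.IsLeaf v → ∃ c, N.Edge v c ∧ (N.IsTreeNode c ∨ N.IsLeaf c)

def IsReticEdge (N : Net α) (e : ℕ × ℕ) : Prop := e ∈ N.edges ∧ N.IsRetic e.2

def deleteNode (N : Net α) (v : ℕ) : Net α :=
  ⟨N.verts.erase v, N.edges.filter fun e => e.1 ≠ v ∧ e.2 ≠ v, N.lab⟩

def deleteEdge (N : Net α) (e : ℕ × ℕ) : Net α := ⟨N.verts, N.edges.erase e, N.lab⟩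

def deleteEdges (N : Net α) (E : Finset (ℕ × ℕ)) : Net α := ⟨N.verts, N.edges \ E, N.lab⟩

/-- One step of cleaning up: delete an unlabelled outdegree-0 node, or suppress an
indegree-1 outdegree-1 node.  (In this simple-digraph encoding the parallel-edge rule
is subsumed: the inserted edge merges with an existing one, and the endpoints are then
suppressed by further steps.) -/
inductive CleanStep {α : Type} : Net α → Net α → Prop
  | delNode (N : Net α) (v : ℕ) (hv : v ∈ N.verts) (h0 : N.outdeg v = 0)
      (hlab : N.lab v = none) : CleanStep N (N.deleteNode v)
  | suppress (N : Net α) (u v w : ℕ) (h1 : N.indeg v = 1) (h2 : N.outdeg v = 1)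
      (hu : N.Edge u v) (hw : N.Edge v w) :
      CleanStep N ⟨N.verts.erase v,
        insert (u, w) (N.edges.filter fun e => e.1 ≠ v ∧ e.2 ≠ v), N.lab⟩

/-- `N` cleans up to `M`: apply clean-up steps until none applies. -/
def CleansTo (N M : Net α) : Prop :=
  Relation.ReflTransGen CleanStep N M ∧ ∀ M', ¬ CleanStep M M'

/-- Maximum subnetwork: delete one reticulation edge and clean up. -/
def IsMaxSubnet (N M : Net α) : Prop :=
  ∃ e, N.IsReticEdge e ∧ CleansTo (N.deleteEdge e) M

/-- A reticulation edge is valid if deleting it and cleaning up removes exactly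
2 nodes and 3 edges. -/
def ValidEdge (N : Net α) (e : ℕ × ℕ) : Prop :=
  N.IsReticEdge e ∧
  ∀ M, CleansTo (N.deleteEdge e) M →
    M.verts.card + 2 = N.verts.card ∧ M.edges.card + 3 = N.edges.card

/-- A valid network: all reticulation edges are valid. -/
def Valid (N : Net α) : Prop :=
  N.IsNetwork ∧ ∀ e, N.IsReticEdge e → N.ValidEdge e

def Subgraph (M N : Net α) : Prop :=
  M.verts ⊆ N.verts ∧ M.edges ⊆ N.edges ∧ ∀ v ∈ M.verts, M.lab v = N.lab v

/-- One edge-subdivision step. -/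
inductive SubdivStep {α : Type} : Net α → Net α → Prop
  | mk (N : Net α) (u v w : ℕ) (he : N.Edge u v) (hw : w ∉ N.verts) :
      SubdivStep N ⟨insert w N.verts,
        insert (u, w) (insert (w, v) (N.edges.erase (u, v))), N.lab⟩

/-- `M` is a subdivision of `N`. -/
def Subdivision (N M : Net α) : Prop := Relation.ReflTransGen SubdivStep N M

/-- Isomorphism of networks (preserving leaf labels). -/
def Iso (N M : Net α) : Prop :=
  ∃ f : ℕ → ℕ, Set.BijOn f ↑N.verts ↑M.verts ∧
    (∀ u ∈ N.verts, ∀ v ∈ N.verts, (N.Edge u v ↔ M.Edge (f u) (f v))) ∧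
    ∀ v ∈ N.verts, N.lab v = M.lab (f v)

/-- `N` displays `M`: some subgraph of `N` is (isomorphic to) a subdivision of `M`. -/
def Displays (N M : Net α) : Prop :=
  ∃ S M', Subgraph S N ∧ Subdivision M M' ∧ Iso M' S

/-- Leaf-descendant (label) set of a node. -/
def descSet (N : Net α) (v : ℕ) : Set α :=
  {x | ∃ l, N.lab l = some x ∧ N.Reaches v l}

def Adj (N : Net α) (u v : ℕ) : Prop := N.Edge u v ∨ N.Edge v u

def ConnectedIn (N : Net α) (S : Finset ℕ) (u v : ℕ) : Prop :=
  Relation.ReflTransGen (fun a b => a ∈ S ∧ b ∈ S ∧ N.Adj a b) u v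

/-- A biconnected vertex set: at least 3 nodes, connected, and no cut-node. -/
def BiconnectedSet (N : Net α) (S : Finset ℕ) : Prop :=
  3 ≤ S.card ∧ S ⊆ N.verts ∧
  (∀ u ∈ S, ∀ v ∈ S, N.ConnectedIn S u v) ∧
  ∀ c ∈ S, ∀ u ∈ S.erase c, ∀ v ∈ S.erase c, N.ConnectedIn (S.erase c) u v

/-- A biconnected component: a maximal biconnected set. -/
def BlobSet (N : Net α) (S : Finset ℕ) : Prop :=
  N.BiconnectedSet S ∧ ∀ T, N.BiconnectedSet T → S ⊆ T → S = T

/-- A blob: either a biconnected component, or a tree node in no biconnected component. -/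
def IsBlob (N : Net α) (S : Finset ℕ) : Prop :=
  N.BlobSet S ∨ ∃ t, S = {t} ∧ N.IsTreeNode t ∧ ∀ T, N.BlobSet T → t ∉ T

/-- The top node of a blob: the node of the blob from which all its nodes are reachable. -/
def TopNode (N : Net α) (S : Finset ℕ) (v : ℕ) : Prop :=
  v ∈ S ∧ ∀ u ∈ S, N.Reaches v u

/-- The blob tree of `N` contains a blob node labelled `A`. -/
def HasBlobNode (N : Net α) (A : Set α) : Prop :=
  ∃ S v, N.IsBlob S ∧ N.TopNode S v ∧ N.descSet v = A

/-- The blob tree of `N` has an edge from blob node `A` to blob node `B`. -/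
def BTEdge (N : Net α) (A B : Set α) : Prop :=
  ∃ S T u v, N.IsBlob S ∧ N.IsBlob T ∧ S ≠ T ∧ N.TopNode S u ∧ N.TopNode T v ∧
    N.descSet u = A ∧ N.descSet v = B ∧ ∃ w ∈ S, N.Edge w v

def reticCount (N : Net α) (S : Finset ℕ) : ℕ := (S.filter fun v => N.IsRetic v).card

/-- `N` is a level-`k` network. -/
def IsLevel (N : Net α) (k : ℕ) : Prop :=
  (∀ S, N.BiconnectedSet S → N.reticCount S ≤ k) ∧
  (k = 0 ∨ ∃ S, N.BiconnectedSet S ∧ N.reticCount S = k)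

/-- `M` is a maximum lower-level subnetwork (MLLS) of the level-`k` network `N`:
obtained by deleting exactly one valid reticulation edge from every level-`k`
biconnected component and cleaning up. -/
def IsMLLS (N : Net α) (k : ℕ) (M : Net α) : Prop :=
  ∃ E : Finset (ℕ × ℕ),
    (∀ e ∈ E, N.ValidEdge e) ∧
    (∀ S, N.BlobSet S → N.reticCount S = k → ∃! e, e ∈ E ∧ e.1 ∈ S ∧ e.2 ∈ S) ∧
    (∀ e ∈ E, ∃ S, N.BlobSet S ∧ N.reticCount S = k ∧ e.1 ∈ S ∧ e.2 ∈ S) ∧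
    CleansTo (N.deleteEdges E) M

/-- A cherry on two leaves. -/
def Cherry (N : Net α) (x y : ℕ) : Prop :=
  N.IsLeaf x ∧ N.IsLeaf y ∧ x ≠ y ∧ ∃ p, N.Edge p x ∧ N.Edge p y

/-- A reticulated cherry on two leaves, with the reticulation on `y`. -/
def RetCherry (N : Net α) (x y : ℕ) : Prop :=
  N.IsLeaf x ∧ N.IsLeaf y ∧
  ∃ p r, N.IsRetic r ∧ N.Edge r y ∧ N.Edge p x ∧ N.Edge p r

/-- A reticulated cherry shape on non-reticulation nodes `x, y` with nodes
`px, py, gy` and edges `(px,x), (px,py), (gy,py), (py,y)`, `py` a reticulation. -/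
def RetCherryShape (N : Net α) (x y px py gy : ℕ) : Prop :=
  ¬ N.IsRetic x ∧ ¬ N.IsRetic y ∧ N.IsRetic py ∧ px ≠ gy ∧
  N.Edge px x ∧ N.Edge px py ∧ N.Edge gy py ∧ N.Edge py y

def DirPath (N : Net α) (l : List ℕ) : Prop := l ≠ [] ∧ l.Chain' N.Edge

/-- `l` is the node sequence of an up-down path from `x` to `y`: a directed path from
an apex down to `x`, reversed, followed by a directed path from the apex down to `y`. -/
def IsUpDownPath (N : Net α) (x y : ℕ) (l : List ℕ) : Prop :=
  ∃ p q : List ℕ, N.DirPath p ∧ N.DirPath q ∧ p.head? = q.head? ∧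
    p.getLast? = some x ∧ q.getLast? = some y ∧ l = p.reverse ++ q.tail

/-- `n` is the shortest up-down distance between `x` and `y` (an up-down path with `n`
edges has `n+1` nodes). -/
def IsUpDownDist (N : Net α) (x y n : ℕ) : Prop :=
  (∃ l, N.IsUpDownPath x y l ∧ l.length = n + 1) ∧
  ∀ l, N.IsUpDownPath x y l → n + 1 ≤ l.length

def relabel (N : Net α) (f : α → β) : Net β :=
  ⟨N.verts, N.edges, fun v => (N.lab v).map f⟩

/-- Collapse the pendant subnetwork rooted at `y` to a single leaf labelled `A`. -/
def collapseAt (N : Net α) (y : ℕ) (A : α) : Net α :=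
  ⟨N.verts.filter (fun v => v = y ∨ ¬ N.Reaches y v),
   N.edges.filter (fun e => ¬ N.Reaches y e.1),
   fun v => if v = y then some A else N.lab v⟩

/-- Leaf-descendant set for networks whose leaves are labelled by sets of taxa. -/
def descUnion (N : Net (Set α)) (v : ℕ) : Set α :=
  {x | ∃ l s, N.lab l = some s ∧ x ∈ s ∧ N.Reaches v l}

def HasBlobNodeU (N : Net (Set α)) (A : Set α) : Prop :=
  ∃ S v, N.IsBlob S ∧ N.TopNode S v ∧ N.descUnion v = A

/-- `M` is a subnetwork of `N`: displayed by `N` and not `N` itself. -/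
def Subnet (N M : Net α) : Prop := M.IsNetwork ∧ N.Displays M ∧ ¬ N.Iso M

/-- Equality of sets of networks up to isomorphism. -/
def SetEquiv (S T : Set (Net α)) : Prop :=
  ∀ M, (∃ M₁ ∈ S, Iso M M₁) ↔ ∃ M₂ ∈ T, Iso M M₂

/-- The subnetworks of `N` of level at most `k - 1`. -/
def lowerSubnets (N : Net α) (k : ℕ) : Set (Net α) :=
  {M | N.Subnet M ∧ ∃ j < k, M.IsLevel j}

/-- The set of all MLLSs of `N`. -/
def mllsSet (N : Net α) : Set (Net α) :=
  {M | ∃ k, N.IsLevel k ∧ N.IsMLLS k M}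

end Net

/-!
The top node of a blob is a tree node, and a blob is determined by its top node: a biconnected
set through a tree node `v` contains a child of `v`, and biconnected sets sharing two nodes
merge. Suppose equally-labelled top nodes `v ≠ w` existed. Following tree paths (paths whose
nodes after the first have indegree one) down to leaves shows that one of them, say `v`, lies
above the other on a tree path. The child `b` of `v` off that path cannot reach `w`, yet `w`
reaches every leaf below `b`, so a tree path from `b` shows that `w` reaches `b`. The edge
`v → b` closes the cycle `v ⇝ w ⇝ b`: the nodes between `v` and `b` form a biconnected set,
which puts `v` into the blob of `w` although `v` lies strictly above `w`.
-/

namespace Net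

variable {α : Type} {N : Net α} {S T : Finset ℕ} {a b c l u v w x y z : ℕ}

def Acyclic (N : Net α) : Prop := ∀ u v, N.Edge u v → ¬ N.Reaches v u

theorem IsNetwork.acyclic (hN : N.IsNetwork) : N.Acyclic := hN.2.1

theorem TreeChild.isNetwork (hN : N.TreeChild) : N.IsNetwork := hN.1

theorem IsNetwork.mem_verts_of_edge (hN : N.IsNetwork) (h : N.Edge u v) :
    u ∈ N.verts ∧ v ∈ N.verts :=
  hN.1 (u, v) h

theorem Acyclic.ne_of_edge (hA : N.Acyclic) (h : N.Edge u v) : u ≠ v := by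
  rintro rfl
  exact hA u u h .refl

theorem Acyclic.ne_of_adj (hA : N.Acyclic) (h : N.Adj u v) : u ≠ v :=
  h.elim hA.ne_of_edge fun h => (hA.ne_of_edge h).symm

theorem Acyclic.eq_of_reaches (hA : N.Acyclic) (huv : N.Reaches u v) (hvu : N.Reaches v u) :
    u = v := by
  rcases Relation.ReflTransGen.cases_tail huv with rfl | ⟨w, huw, hwv⟩
  · rfl
  · exact absurd (Relation.ReflTransGen.trans hvu huw) (hA w v hwv)

theorem eq_of_edge_of_indeg_eq_one (h : N.indeg v = 1) (ha : N.Edge a v) (hb : N.Edge b v) :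
    a = b :=
  congrArg Prod.fst <| Finset.card_le_one.mp h.le (a, v) (Finset.mem_filter.mpr ⟨ha, rfl⟩)
    (b, v) (Finset.mem_filter.mpr ⟨hb, rfl⟩)

theorem two_le_outdeg (hab : a ≠ b) (ha : N.Edge v a) (hb : N.Edge v b) : 2 ≤ N.outdeg v :=
  Finset.one_lt_card.mpr ⟨(v, a), Finset.mem_filter.mpr ⟨ha, rfl⟩,
    (v, b), Finset.mem_filter.mpr ⟨hb, rfl⟩, by simpa using hab⟩

theorem eq_or_eq_of_outdeg_eq_two (h : N.outdeg v = 2) (hab : a ≠ b) (ha : N.Edge v a)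
    (hb : N.Edge v b) (hc : N.Edge v c) : c = a ∨ c = b := by
  by_contra! hc'
  have : 2 < N.outdeg v := Finset.two_lt_card.mpr
    ⟨(v, a), Finset.mem_filter.mpr ⟨ha, rfl⟩, (v, b), Finset.mem_filter.mpr ⟨hb, rfl⟩,
      (v, c), Finset.mem_filter.mpr ⟨hc, rfl⟩,
      by simpa using hab, by simpa using hc'.1.symm, by simpa using hc'.2.symm⟩
  omega

theorem exists_edge_ne_of_outdeg_eq_two (h : N.outdeg v = 2) (a : ℕ) :
    ∃ b, b ≠ a ∧ N.Edge v b := by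
  obtain ⟨e, he, hne⟩ := Finset.exists_mem_ne (h ▸ one_lt_two : 1 < N.outdeg v) (v, a)
  obtain ⟨he, hev⟩ := Finset.mem_filter.mp he
  refine ⟨e.2, fun h => hne (Prod.ext hev h), ?_⟩
  rw [Edge, ← hev]
  exact he

theorem reaches_of_edge_of_indeg_eq_one (h : N.indeg y = 1) (hxy : N.Edge x y)
    (hwy : N.Reaches w y) (hne : w ≠ y) : N.Reaches w x := by
  rcases Relation.ReflTransGen.cases_tail hwy with rfl | ⟨a, hwa, hay⟩
  · exact absurd rfl hne
  · rwa [eq_of_edge_of_indeg_eq_one h hay hxy] at hwa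

def TreeReaches (N : Net α) : ℕ → ℕ → Prop :=
  Relation.ReflTransGen fun a b => N.Edge a b ∧ N.indeg b = 1

theorem TreeReaches.reaches (h : N.TreeReaches u v) : N.Reaches u v :=
  Relation.ReflTransGen.mono (fun _ _ h => h.1) _ _ h

theorem TreeReaches.reaches_of_edge (h : N.TreeReaches u y) (hxy : N.Edge x y) (hne : u ≠ y) :
    N.Reaches u x := by
  rcases Relation.ReflTransGen.cases_tail h with rfl | ⟨a, hua, hay, hy⟩
  · exact absurd rfl hne
  · rw [eq_of_edge_of_indeg_eq_one hy hay hxy] at hua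
    exact TreeReaches.reaches hua

theorem TreeReaches.reaches_or_treeReaches (h : N.TreeReaches v x) (hwx : N.Reaches w x) :
    N.Reaches w v ∨ N.TreeReaches v w := by
  induction h with
  | refl => exact Or.inl hwx
  | @tail a b hva hab ih =>
    by_cases hwb : w = b
    · exact Or.inr (hwb ▸ hva.tail hab)
    · exact ih (reaches_of_edge_of_indeg_eq_one hab.2 hab.1 hwx hwb)

theorem TreeReaches.exists_edge_not_reaches (hA : N.Acyclic) (hv : N.outdeg v = 2)
    (hvw : N.TreeReaches v w) (hne : v ≠ w) : ∃ b, N.Edge v b ∧ ¬ N.Reaches b w := by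
  obtain ⟨u, ⟨hvu, hu⟩, huw : N.TreeReaches u w⟩ :=
    (Relation.ReflTransGen.cases_head hvw).resolve_left hne
  obtain ⟨b, hbu, hvb⟩ := exists_edge_ne_of_outdeg_eq_two hv u
  refine ⟨b, hvb, fun hbw => ?_⟩
  rcases huw.reaches_or_treeReaches hbw with hbu' | hub
  · exact hA v b hvb (reaches_of_edge_of_indeg_eq_one hu hvu hbu' hbu)
  · exact hA v u hvu (hub.reaches_of_edge hvb hbu.symm)

theorem TreeChild.exists_isLeaf_treeReaches (hN : N.TreeChild) (hv : v ∈ N.verts) :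
    ∃ l, N.IsLeaf l ∧ N.TreeReaches v l := by
  let below : ℕ → Finset ℕ := fun w => N.verts.filter (N.Reaches w)
  obtain ⟨l, hl, hmin⟩ := (N.verts.filter (N.TreeReaches v)).exists_min_image
    (fun w => (below w).card) ⟨v, Finset.mem_filter.mpr ⟨hv, .refl⟩⟩
  obtain ⟨hlV, hvl⟩ := Finset.mem_filter.mp hl
  refine ⟨l, by_contra fun hleaf => ?_, hvl⟩
  obtain ⟨c, hlc, hc⟩ := hN.2 l hlV hleaf
  have hcV : c ∈ N.verts ∧ N.indeg c = 1 := by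
    rcases hc with hc | hc <;> exact ⟨hc.1, hc.2.1⟩
  have hlt : (below c).card < (below l).card := by
    refine Finset.card_lt_card ⟨fun w hw => ?_, fun hsub => ?_⟩
    · obtain ⟨hwV, hcw⟩ := Finset.mem_filter.mp hw
      exact Finset.mem_filter.mpr ⟨hwV, .head hlc hcw⟩
    · exact hN.isNetwork.acyclic l c hlc
        (Finset.mem_filter.mp (hsub (Finset.mem_filter.mpr ⟨hlV, .refl⟩))).2
  exact (hmin c (Finset.mem_filter.mpr ⟨hcV.1, hvl.tail ⟨hlc, hcV.2⟩⟩)).not_gt hlt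

theorem descSet_subset_of_reaches (h : N.Reaches u v) : N.descSet v ⊆ N.descSet u :=
  fun _ ⟨l, hl, hvl⟩ => ⟨l, hl, Relation.ReflTransGen.trans h hvl⟩

theorem IsNetwork.reaches_of_descSet_subset (hN : N.IsNetwork) (hd : N.descSet v ⊆ N.descSet w)
    (hl : N.IsLeaf l) (hvl : N.Reaches v l) : N.Reaches w l := by
  obtain ⟨-, -, -, -, hlab, hlabUnique⟩ := hN
  obtain ⟨x, hx⟩ := (hlab l).mpr hl
  obtain ⟨l', hl', hwl'⟩ := hd ⟨l, hx, hvl⟩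
  rwa [(hlabUnique x).unique hl' hx] at hwl'

theorem TreeChild.reaches_or_treeReaches_of_descSet_subset (hN : N.TreeChild)
    (hv : v ∈ N.verts) (hd : N.descSet v ⊆ N.descSet w) :
    N.Reaches w v ∨ N.TreeReaches v w := by
  obtain ⟨l, hl, hvl⟩ := hN.exists_isLeaf_treeReaches hv
  exact hvl.reaches_or_treeReaches (hN.isNetwork.reaches_of_descSet_subset hd hl hvl.reaches)

theorem ConnectedIn.single (hu : u ∈ S) (hv : v ∈ S) (h : N.Adj u v) : N.ConnectedIn S u v :=
  Relation.ReflTransGen.single ⟨hu, hv, h⟩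

theorem ConnectedIn.trans (huv : N.ConnectedIn S u v) (hvw : N.ConnectedIn S v w) :
    N.ConnectedIn S u w :=
  Relation.ReflTransGen.trans huv hvw

theorem ConnectedIn.symm (h : N.ConnectedIn S u v) : N.ConnectedIn S v u := by
  induction h with
  | refl => exact .refl
  | tail _ hab ih => exact .head ⟨hab.2.1, hab.1, hab.2.2.symm⟩ ih

theorem ConnectedIn.mono (hST : S ⊆ T) (h : N.ConnectedIn S u v) : N.ConnectedIn T u v :=
  Relation.ReflTransGen.mono (fun _ _ h => ⟨hST h.1, hST h.2.1, h.2.2⟩) _ _ h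

theorem ConnectedIn.exists_adj (h : N.ConnectedIn S u v) (hne : u ≠ v) :
    ∃ a ∈ S, N.Adj u a := by
  obtain ⟨a, ⟨-, ha, hua⟩, -⟩ := (Relation.ReflTransGen.cases_head h).resolve_left hne
  exact ⟨a, ha, hua⟩

theorem BiconnectedSet.connectedIn_erase (hS : N.BiconnectedSet S) (c : ℕ) (hu : u ∈ S.erase c)
    (hv : v ∈ S.erase c) : N.ConnectedIn (S.erase c) u v := by
  by_cases hc : c ∈ S
  · exact hS.2.2.2 c hc u hu v hv
  · rw [Finset.erase_eq_of_notMem hc] at hu hv ⊢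
    exact hS.2.2.1 u hu v hv

theorem biconnectedSet_of_connectedIn_erase (h3 : 3 ≤ S.card) (hSV : S ⊆ N.verts)
    (h : ∀ c, ∀ u ∈ S.erase c, ∀ v ∈ S.erase c, N.ConnectedIn (S.erase c) u v) :
    N.BiconnectedSet S := by
  refine ⟨h3, hSV, fun u hu v hv => ?_, fun c _ => h c⟩
  obtain ⟨c, hc, hcv⟩ := Finset.exists_mem_ne (s := S.erase u)
    (by rw [Finset.card_erase_of_mem hu]; omega) v
  obtain ⟨hcu, -⟩ := Finset.mem_erase.mp hc
  exact (h c u (Finset.mem_erase.mpr ⟨hcu.symm, hu⟩) v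
    (Finset.mem_erase.mpr ⟨hcv.symm, hv⟩)).mono (Finset.erase_subset c S)

theorem BiconnectedSet.union (hS : N.BiconnectedSet S) (hT : N.BiconnectedSet T)
    (hxS : x ∈ S) (hxT : x ∈ T) (hyS : y ∈ S) (hyT : y ∈ T) (hxy : x ≠ y) :
    N.BiconnectedSet (S ∪ T) := by
  refine biconnectedSet_of_connectedIn_erase
    (hS.1.trans (Finset.card_le_card Finset.subset_union_left))
    (Finset.union_subset hS.2.1 hT.2.1) fun c => ?_
  obtain ⟨z, hzS, hzT, hzc⟩ : ∃ z ∈ S, z ∈ T ∧ z ≠ c := by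
    by_cases hxc : x = c
    · exact ⟨y, hyS, hyT, hxc ▸ hxy.symm⟩
    · exact ⟨x, hxS, hxT, hxc⟩
  have hub : ∀ u ∈ (S ∪ T).erase c, N.ConnectedIn ((S ∪ T).erase c) u z := by
    intro u hu
    obtain ⟨huc, hu⟩ := Finset.mem_erase.mp hu
    rcases Finset.mem_union.mp hu with hu | hu
    · exact (hS.connectedIn_erase c (Finset.mem_erase.mpr ⟨huc, hu⟩)
        (Finset.mem_erase.mpr ⟨hzc, hzS⟩)).mono
        (Finset.erase_subset_erase c Finset.subset_union_left)
    · exact (hT.connectedIn_erase c (Finset.mem_erase.mpr ⟨huc, hu⟩)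
        (Finset.mem_erase.mpr ⟨hzc, hzT⟩)).mono
        (Finset.erase_subset_erase c Finset.subset_union_right)
  exact fun u hu v hv => (hub u hu).trans (hub v hv).symm

theorem BiconnectedSet.exists_blobSet_superset (hS : N.BiconnectedSet S) :
    ∃ T, N.BlobSet T ∧ S ⊆ T := by
  obtain ⟨T, hT, hmax⟩ := Finset.exists_max_image
    (N.verts.powerset.filter fun T => N.BiconnectedSet T ∧ S ⊆ T) Finset.card
    ⟨S, Finset.mem_filter.mpr ⟨Finset.mem_powerset.mpr hS.2.1, hS, subset_rfl⟩⟩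
  obtain ⟨-, hT, hST⟩ := Finset.mem_filter.mp hT
  refine ⟨T, ⟨hT, fun T' hT' hTT' => Finset.eq_of_subset_of_card_le hTT' ?_⟩, hST⟩
  exact hmax T' (Finset.mem_filter.mpr ⟨Finset.mem_powerset.mpr hT'.2.1, hT', hST.trans hTT'⟩)

theorem BiconnectedSet.exists_adj_ne (hA : N.Acyclic) (hS : N.BiconnectedSet S) (hv : v ∈ S) :
    ∃ a ∈ S, ∃ b ∈ S, a ≠ b ∧ N.Adj v a ∧ N.Adj v b := by
  obtain ⟨u, hu, huv⟩ := Finset.exists_mem_ne (show 1 < S.card by have := hS.1; omega) v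
  obtain ⟨a, ha, hva⟩ := (hS.2.2.1 v hv u hu).exists_adj huv.symm
  have hvS : v ∈ S.erase a := Finset.mem_erase.mpr ⟨hA.ne_of_adj hva, hv⟩
  obtain ⟨u', hu', hu'v⟩ := Finset.exists_mem_ne
    (show 1 < (S.erase a).card by rw [Finset.card_erase_of_mem ha]; have := hS.1; omega) v
  obtain ⟨b, hb, hvb⟩ := (hS.connectedIn_erase a hvS hu').exists_adj hu'v.symm
  obtain ⟨hba, hb⟩ := Finset.mem_erase.mp hb
  exact ⟨a, ha, b, hb, hba.symm, hva, hvb⟩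

theorem BiconnectedSet.exists_edge_of_indeg_eq_one (hA : N.Acyclic) (hS : N.BiconnectedSet S)
    (hv : v ∈ S) (h : N.indeg v = 1) : ∃ c ∈ S, N.Edge v c := by
  obtain ⟨a, ha, b, hb, hab, hva | hav, hvb | hbv⟩ := hS.exists_adj_ne hA hv
  · exact ⟨a, ha, hva⟩
  · exact ⟨a, ha, hva⟩
  · exact ⟨b, hb, hvb⟩
  · exact absurd (eq_of_edge_of_indeg_eq_one h hav hbv) hab

theorem BiconnectedSet.exists_edge_ne_of_topNode (hA : N.Acyclic) (hS : N.BiconnectedSet S)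
    (ht : N.TopNode S v) : ∃ a ∈ S, ∃ b ∈ S, a ≠ b ∧ N.Edge v a ∧ N.Edge v b := by
  obtain ⟨a, ha, b, hb, hab, hva, hvb⟩ := hS.exists_adj_ne hA ht.1
  have hchild : ∀ w ∈ S, N.Adj v w → N.Edge v w :=
    fun w hw h => h.resolve_right fun hwv => hA w v hwv (ht.2 w hw)
  exact ⟨a, ha, b, hb, hab, hchild a ha hva, hchild b hb hvb⟩

theorem BiconnectedSet.isTreeNode_of_topNode (hN : N.IsNetwork) (hS : N.BiconnectedSet S)
    (ht : N.TopNode S v) : N.IsTreeNode v := by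
  obtain ⟨a, -, b, -, hab, hva, hvb⟩ := hS.exists_edge_ne_of_topNode hN.acyclic ht
  have h2 := two_le_outdeg hab hva hvb
  obtain ⟨-, -, -, hdeg, -, -⟩ := hN
  rcases hdeg v (hS.2.1 ht.1) with ⟨-, -, h⟩ | ⟨-, -, h⟩ | h | ⟨-, -, h⟩
  · omega
  · omega
  · exact h
  · omega

theorem IsBlob.isTreeNode_of_topNode (hN : N.IsNetwork) (hS : N.IsBlob S)
    (ht : N.TopNode S v) : N.IsTreeNode v := by
  rcases hS with hS | ⟨t, rfl, ht', -⟩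
  · exact hS.1.isTreeNode_of_topNode hN ht
  · rwa [Finset.mem_singleton.mp ht.1]

theorem IsBlob.subset_of_topNode (hN : N.IsNetwork) (hS : N.IsBlob S) (ht : N.TopNode S v)
    (hT : N.BiconnectedSet T) (hvT : v ∈ T) : T ⊆ S := by
  rcases hS with hS | ⟨t, rfl, -, hnot⟩
  · have hv := hS.1.isTreeNode_of_topNode hN ht
    obtain ⟨c, hcT, hvc⟩ := hT.exists_edge_of_indeg_eq_one hN.acyclic hvT hv.2.1
    obtain ⟨a, ha, b, hb, hab, hva, hvb⟩ := hS.1.exists_edge_ne_of_topNode hN.acyclic ht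
    have hcS : c ∈ S := by
      rcases eq_or_eq_of_outdeg_eq_two hv.2.2 hab hva hvb hvc with rfl | rfl <;> assumption
    have hunion := hS.1.union hT ht.1 hvT hcS hcT (hN.acyclic.ne_of_edge hvc)
    rw [hS.2 _ hunion Finset.subset_union_left]
    exact Finset.subset_union_right
  · obtain ⟨B, hB, hTB⟩ := hT.exists_blobSet_superset
    exact absurd (hTB (Finset.mem_singleton.mp ht.1 ▸ hvT)) (hnot B hB)

theorem IsBlob.eq_of_topNode (hN : N.IsNetwork) (hS : N.IsBlob S) (hT : N.IsBlob T)
    (htS : N.TopNode S v) (htT : N.TopNode T v) : S = T := by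
  rcases id hS with hS' | ⟨t, rfl, -, hnotS⟩ <;> rcases id hT with hT' | ⟨t', rfl, -, hnotT⟩
  · exact (hT.subset_of_topNode hN htT hS'.1 htS.1).antisymm
      (hS.subset_of_topNode hN htS hT'.1 htT.1)
  · exact absurd htS.1 (Finset.mem_singleton.mp htT.1 ▸ hnotT S hS')
  · exact absurd htT.1 (Finset.mem_singleton.mp htS.1 ▸ hnotS T hT')
  · rw [← Finset.mem_singleton.mp htS.1, ← Finset.mem_singleton.mp htT.1]

def between (N : Net α) (x z : ℕ) : Finset ℕ :=
  N.verts.filter fun w => N.Reaches x w ∧ N.Reaches w z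

theorem IsNetwork.mem_between (hN : N.IsNetwork) (hxw : N.Reaches x w) (hwz : N.Reaches w z)
    (hxz : x ≠ z) : w ∈ N.between x z := by
  refine Finset.mem_filter.mpr ⟨?_, hxw, hwz⟩
  rcases Relation.ReflTransGen.cases_tail hxw with rfl | ⟨a, -, haw⟩
  · obtain ⟨b, hwb, -⟩ := (Relation.ReflTransGen.cases_head hwz).resolve_left hxz
    exact (hN.mem_verts_of_edge hwb).1
  · exact (hN.mem_verts_of_edge haw).2

theorem IsNetwork.connectedIn_erase_between_or_reaches (hN : N.IsNetwork) (hxz : x ≠ z)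
    (hxa : N.Reaches x a) (haw : N.Reaches a w) (hwz : N.Reaches w z) (hwc : w ≠ c) :
    N.ConnectedIn ((N.between x z).erase c) a w ∨ N.Reaches a c ∧ N.Reaches c w := by
  induction haw with
  | refl => exact Or.inl .refl
  | @tail b w hab hbw ih =>
    by_cases hbc : b = c
    · exact Or.inr ⟨hbc ▸ hab, hbc ▸ .single hbw⟩
    rcases ih (.head hbw hwz) hbc with h | ⟨hac, hcb⟩
    · refine Or.inl (h.trans (.single ?_ ?_ (.inl hbw)))
      · exact Finset.mem_erase.mpr ⟨hbc, hN.mem_between (.trans hxa hab) (.head hbw hwz) hxz⟩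
      · exact Finset.mem_erase.mpr ⟨hwc, hN.mem_between (.tail (.trans hxa hab) hbw) hwz hxz⟩
    · exact Or.inr ⟨hac, hcb.tail hbw⟩

/-- Since `c` cannot lie both above and below `u ≠ c`, one of the directed paths `x ⇝ u`,
`u ⇝ z` avoids `c`. -/
theorem IsNetwork.connectedIn_erase_between_endpoint (hN : N.IsNetwork) (hxz : x ≠ z)
    (hu : u ∈ (N.between x z).erase c) :
    x ≠ c ∧ N.ConnectedIn ((N.between x z).erase c) u x ∨
      z ≠ c ∧ N.ConnectedIn ((N.between x z).erase c) u z := by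
  obtain ⟨huc, hu⟩ := Finset.mem_erase.mp hu
  obtain ⟨hxu, huz⟩ := (Finset.mem_filter.mp hu).2
  have hA := hN.acyclic
  have to_z (hcu : N.Reaches c u) : z ≠ c ∧ N.ConnectedIn ((N.between x z).erase c) u z := by
    have hzc : z ≠ c := fun hzc => huc (hA.eq_of_reaches (hzc ▸ huz) hcu)
    refine ⟨hzc, ?_⟩
    rcases hN.connectedIn_erase_between_or_reaches hxz hxu huz .refl hzc with h | ⟨huc', -⟩
    · exact h
    · exact absurd (hA.eq_of_reaches huc' hcu) huc
  by_cases hxc : x = c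
  · exact Or.inr (to_z (hxc ▸ hxu))
  rcases hN.connectedIn_erase_between_or_reaches hxz .refl hxu huz huc with h | ⟨-, hcu⟩
  · exact Or.inl ⟨hxc, h.symm⟩
  · exact Or.inr (to_z hcu)

theorem IsNetwork.biconnectedSet_between (hN : N.IsNetwork) (hxz : N.Edge x z)
    (h3 : 3 ≤ (N.between x z).card) : N.BiconnectedSet (N.between x z) := by
  have hne := hN.acyclic.ne_of_edge hxz
  have hxI := hN.mem_between .refl (.single hxz) hne
  have hzI := hN.mem_between (.single hxz) .refl hne
  refine biconnectedSet_of_connectedIn_erase h3 (Finset.filter_subset _ _) fun c => ?_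
  obtain ⟨h, hub⟩ : ∃ h, ∀ u ∈ (N.between x z).erase c,
      N.ConnectedIn ((N.between x z).erase c) u h := by
    by_cases hxc : x = c
    · exact ⟨z, fun u hu =>
        ((hN.connectedIn_erase_between_endpoint hne hu).resolve_left fun h => h.1 hxc).2⟩
    refine ⟨x, fun u hu => ?_⟩
    rcases hN.connectedIn_erase_between_endpoint hne hu with ⟨-, h⟩ | ⟨hzc, h⟩
    · exact h
    · exact h.trans (.single (Finset.mem_erase.mpr ⟨hzc, hzI⟩)
        (Finset.mem_erase.mpr ⟨hxc, hxI⟩) (.inr hxz))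
  exact fun u hu v hv => (hub u hu).trans (hub v hv).symm

theorem IsNetwork.exists_biconnectedSet_of_reaches_of_edge (hN : N.IsNetwork)
    (hxy : N.Reaches x y) (hyz : N.Reaches y z) (hxz : N.Edge x z) (hxy' : x ≠ y)
    (hyz' : y ≠ z) : ∃ T, N.BiconnectedSet T ∧ x ∈ T ∧ y ∈ T := by
  have hne := hN.acyclic.ne_of_edge hxz
  have hx := hN.mem_between .refl (.trans hxy hyz) hne
  have hy := hN.mem_between hxy hyz hne
  have hz := hN.mem_between (.trans hxy hyz) .refl hne
  exact ⟨_, hN.biconnectedSet_between hxz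
    (Finset.two_lt_card.mpr ⟨x, hx, y, hy, z, hz, hxy', hne, hyz'⟩), hx, hy⟩

theorem TreeChild.exists_biconnectedSet_of_descSet_subset (hN : N.TreeChild)
    (hv : N.IsTreeNode v) (hvw : N.Reaches v w) (hne : v ≠ w)
    (hd : N.descSet v ⊆ N.descSet w) : ∃ T, N.BiconnectedSet T ∧ v ∈ T ∧ w ∈ T := by
  have hA := hN.isNetwork.acyclic
  have hvw' : N.TreeReaches v w :=
    (hN.reaches_or_treeReaches_of_descSet_subset hv.1 hd).resolve_left
      fun hwv => hne (hA.eq_of_reaches hvw hwv)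
  obtain ⟨b, hvb, hbw⟩ := hvw'.exists_edge_not_reaches hA hv.2.2 hne
  have hwb : N.Reaches w b := (hN.reaches_or_treeReaches_of_descSet_subset
    (hN.isNetwork.mem_verts_of_edge hvb).2 ((descSet_subset_of_reaches (.single hvb)).trans hd)
    ).resolve_right fun h => hbw h.reaches
  exact hN.isNetwork.exists_biconnectedSet_of_reaches_of_edge hvw hwb hvb hne
    fun h => hbw (h ▸ .refl)

theorem IsBlob.not_descSet_subset_of_reaches (hN : N.TreeChild) (hS : N.IsBlob S)
    (ht : N.TopNode S w) (hv : N.IsTreeNode v) (hvw : N.Reaches v w) (hne : v ≠ w) :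
    ¬ N.descSet v ⊆ N.descSet w := fun hd => by
  obtain ⟨T, hT, hvT, hwT⟩ := hN.exists_biconnectedSet_of_descSet_subset hv hvw hne hd
  exact hne (hN.isNetwork.acyclic.eq_of_reaches hvw
    (ht.2 v (hS.subset_of_topNode hN.isNetwork ht hT hwT hvT)))

end Net

/-- In the blob tree of a binary tree-child network, no two blob nodes
carry the same leaf-descendant set: two blobs with equally-labelled top nodes coincide. -/
theorem blobTree_labels_unique {X : Type} (N : Net X) (hN : N.TreeChild)
    (S₁ S₂ : Finset ℕ) (v₁ v₂ : ℕ)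
    (h₁ : N.IsBlob S₁) (h₂ : N.IsBlob S₂)
    (ht₁ : N.TopNode S₁ v₁) (ht₂ : N.TopNode S₂ v₂)
    (hd : N.descSet v₁ = N.descSet v₂) : S₁ = S₂ := by
  rcases eq_or_ne v₁ v₂ with rfl | hne
  · exact h₁.eq_of_topNode hN.isNetwork h₂ ht₁ ht₂
  have hv₁ := h₁.isTreeNode_of_topNode hN.isNetwork ht₁
  have hv₂ := h₂.isTreeNode_of_topNode hN.isNetwork ht₂
  exfalso
  rcases hN.reaches_or_treeReaches_of_descSet_subset hv₁.1 hd.subset with h | h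
  · exact h₁.not_descSet_subset_of_reaches hN ht₁ hv₂ h hne.symm hd.symm.subset
  · exact h₂.not_descSet_subset_of_reaches hN ht₂ hv₁ h.reaches hne hd.subset
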